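/- Suppose Γ is an E-complete maximally tableau FOLP_CS-consistent set of closed Par-formulas. Then Γ is closed under all FOLP_CS-tableau rules: for every non-branching rule with premise α and conclusions α₁ (and α₂), if α ∈ Γ then α₁ ∈ Γ (and α₂ ∈ Γ); and for every branching rule with premise β and alternatives β₁ | β₂, if β ∈ Γ then β₁ ∈ Γ or β₂ ∈ Γ (in particular, if ¬(s·t):_X B ∈ Γ then for every formula A with Par(A) ⊆ X, either ¬s:_X(A→B) ∈ Γ or ¬t:_X A ∈ Γ). -/

import Mathlib

open scoped Classical

/-- Justification terms of FOLP, built from justification variables `jvar i`,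
justification constants `jconst i`, and the operations `+`, `·`, `!`, `genₓ`. -/
inductive Tm : Type
  | jvar : ℕ → Tm
  | jconst : ℕ → Tm
  | plus : Tm → Tm → Tm
  | app : Tm → Tm → Tm
  | bang : Tm → Tm
  | gen : ℕ → Tm → Tm
  deriving DecidableEq

/-- FOLP formulas with extra individual constants from `K` (`K`-formulas).
Individual variables are natural numbers; an argument `Sum.inl x` is an individual
variable, `Sum.inr a` is an element of `K`.  Predicate symbols are indexed by `ℕ`.
Plain FOLP formulas are `Fm Empty`, Par-formulas are `Fm ℕ` (the parameters being a
separate copy of ℕ, namely the `Sum.inr` part), and `D`-formulas are `Fm D`.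
`just t X A` is the justification assertion `t :_X A`. -/
inductive Fm (K : Type) : Type
  | pred : ℕ → List (ℕ ⊕ K) → Fm K
  | neg : Fm K → Fm K
  | imp : Fm K → Fm K → Fm K
  | all : ℕ → Fm K → Fm K
  | ex : ℕ → Fm K → Fm K
  | just : Tm → Finset (ℕ ⊕ K) → Fm K → Fm K

namespace Fm

variable {K K' : Type}

/-- Free individual variables of a `K`-formula.  Recall that
`FVar (t :_X A) = X` (more precisely, the individual-variable part of `X`). -/
noncomputable def fvar : Fm K → Finset ℕ
  | pred _ args => (args.filterMap Sum.getLeft?).toFinset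
  | neg A => A.fvar
  | imp A B => A.fvar ∪ B.fvar
  | all x A => A.fvar.erase x
  | ex x A => A.fvar.erase x
  | just _ X _ => (X.toList.filterMap Sum.getLeft?).toFinset

/-- The elements of `K` occurring in a `K`-formula (for `K = Par` this is `Par(A)`,
for `K = D` this is `D(A)`). -/
noncomputable def kocc : Fm K → Finset K
  | pred _ args => (args.filterMap Sum.getRight?).toFinset
  | neg A => A.kocc
  | imp A B => A.kocc ∪ B.kocc
  | all _ A => A.kocc
  | ex _ A => A.kocc
  | just _ X A => A.kocc ∪ (X.toList.filterMap Sum.getRight?).toFinset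

/-- A `K`-formula is closed if it contains no free occurrences of individual variables. -/
def Closed (A : Fm K) : Prop := A.fvar = ∅

/-- Action of a partial substitution (of elements of `K` for individual variables)
on variables/`K`-elements. -/
def subK (σ : ℕ → Option K) : ℕ ⊕ K → ℕ ⊕ K
  | .inl x => (σ x).elim (.inl x) .inr
  | .inr a => .inr a

/-- Simultaneous substitution of elements of `K` for free individual variables.
In `t :_X A` only the variables belonging to `X` are free, so only those get
substituted (both inside `X` and inside `A`). -/
noncomputable def msubst (σ : ℕ → Option K) : Fm K → Fm K
  | pred Q args => pred Q (args.map (subK σ))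
  | neg A => neg (A.msubst σ)
  | imp A B => imp (A.msubst σ) (B.msubst σ)
  | all x A => all x (A.msubst fun y => if y = x then none else σ y)
  | ex x A => ex x (A.msubst fun y => if y = x then none else σ y)
  | just t X A =>
      just t (X.image (subK σ)) (A.msubst fun y => if Sum.inl y ∈ X then σ y else none)

/-- `A.subst1 x a` is `A(a)`, i.e. `A{x/a}`: the result of replacing all free
occurrences of the individual variable `x` by the element `a : K`. -/
noncomputable def subst1 (x : ℕ) (a : K) (A : Fm K) : Fm K :=
  A.msubst fun y => if y = x then some a else none

/-- Action of a variable-for-variable substitution on arguments. -/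
def subVV (x y : ℕ) : ℕ ⊕ K → ℕ ⊕ K
  | .inl z => if z = x then .inl y else .inl z
  | .inr a => .inr a

/-- `A.vsubst x y` is `A{x/y}`: substitution of the individual variable `y` for
the free occurrences of the individual variable `x`. -/
noncomputable def vsubst (x y : ℕ) : Fm K → Fm K
  | pred Q args => pred Q (args.map (subVV x y))
  | neg A => neg (A.vsubst x y)
  | imp A B => imp (A.vsubst x y) (B.vsubst x y)
  | all z A => if z = x then all z A else all z (A.vsubst x y)
  | ex z A => if z = x then ex z A else ex z (A.vsubst x y)
  | just t X A =>
      if Sum.inl x ∈ X then just t (X.image (subVV x y)) (A.vsubst x y) else just t X A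

/-- `FreeFor y x A`: the variable `y` is substitutable for the variable `x` in `A`
(no free occurrence of `x` lies in the scope of a quantifier binding `y`). -/
def FreeFor (y x : ℕ) : Fm K → Prop
  | pred _ _ => True
  | neg A => FreeFor y x A
  | imp A B => FreeFor y x A ∧ FreeFor y x B
  | all z A => x = z ∨ x ∉ A.fvar ∨ (y ≠ z ∧ FreeFor y x A)
  | ex z A => x = z ∨ x ∉ A.fvar ∨ (y ≠ z ∧ FreeFor y x A)
  | just _ X A => Sum.inl x ∈ X → FreeFor y x A

/-- Action of a renaming on arguments. -/
def subR (σ : ℕ → ℕ) : ℕ ⊕ K → ℕ ⊕ K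
  | .inl x => .inl (σ x)
  | .inr a => .inr a

/-- Renaming of all (free and bound) individual variables. -/
noncomputable def rename (σ : ℕ → ℕ) : Fm K → Fm K
  | pred Q args => pred Q (args.map (subR σ))
  | neg A => neg (A.rename σ)
  | imp A B => imp (A.rename σ) (B.rename σ)
  | all x A => all (σ x) (A.rename σ)
  | ex x A => ex (σ x) (A.rename σ)
  | just t X A => just t (X.image (subR σ)) (A.rename σ)

/-- Mapping the extra individual constants of a `K`-formula along `f : K → K'`. -/
noncomputable def kmap (f : K → K') : Fm K → Fm K'
  | pred Q args => pred Q (args.map (Sum.map id f))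
  | neg A => neg (A.kmap f)
  | imp A B => imp (A.kmap f) (B.kmap f)
  | all x A => all x (A.kmap f)
  | ex x A => ex x (A.kmap f)
  | just t X A => just t (X.image (Sum.map id f)) (A.kmap f)

/-- A size measure used for the well-founded recursion defining truth. -/
noncomputable def size : Fm K → ℕ
  | pred _ _ => 0
  | neg A => A.size + 1
  | imp A B => A.size + B.size + 1
  | all _ A => A.size + 1
  | ex _ A => A.size + 1
  | just _ _ A => A.size + A.fvar.card + 1


theorem fvar_msubst_subset (σ : ℕ → Option K) (A : Fm K) :
    (A.msubst σ).fvar ⊆ A.fvar := by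
  induction A generalizing σ with
  | pred Q args =>
      intro y hy
      simp only [msubst, fvar, List.mem_toFinset, List.mem_filterMap, List.mem_map] at hy ⊢
      obtain ⟨s, ⟨a, ha, rfl⟩, hget⟩ := hy
      cases a with
      | inl z =>
          cases hσ : σ z with
          | none =>
              simp [subK, hσ] at hget
              exact ⟨Sum.inl z, ha, by simp [hget]⟩
          | some b => simp [subK, hσ] at hget
      | inr b => simp [subK] at hget
  | neg A ih => exact ih σ
  | imp A B ihA ihB =>
      simp only [msubst, fvar]
      exact Finset.union_subset_union (ihA σ) (ihB σ)
  | all x A ih =>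
      simp only [msubst, fvar]
      exact Finset.erase_subset_erase x (ih _)
  | ex x A ih =>
      simp only [msubst, fvar]
      exact Finset.erase_subset_erase x (ih _)
  | just t X A ih =>
      intro y hy
      simp only [msubst, fvar, List.mem_toFinset, List.mem_filterMap,
        Finset.mem_toList, Finset.mem_image] at hy ⊢
      obtain ⟨s, ⟨a, ha, rfl⟩, hget⟩ := hy
      cases a with
      | inl z =>
          cases hσ : σ z with
          | none =>
              refine ⟨Sum.inl z, ha, ?_⟩
              simp only [subK, hσ, Option.elim] at hget
              simpa using hget
          | some b => simp [subK, hσ] at hget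
      | inr b => simp [subK] at hget

theorem size_msubst_le (σ : ℕ → Option K) (A : Fm K) :
    (A.msubst σ).size ≤ A.size := by
  induction A generalizing σ with
  | pred Q args => simp [msubst, size]
  | neg A ih => simpa [msubst, size] using ih σ
  | imp A B ihA ihB =>
      simp only [msubst, size]
      have := ihA σ; have := ihB σ; omega
  | all x A ih => simpa [msubst, size] using ih _
  | ex x A ih => simpa [msubst, size] using ih _
  | just t X A ih =>
      simp only [msubst, size]
      have h1 := ih (fun y => if Sum.inl y ∈ X then σ y else none)
      have h2 := Finset.card_le_card
        (fvar_msubst_subset (fun y => if Sum.inl y ∈ X then σ y else none) A)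
      omega

theorem size_subst1_le (x : ℕ) (a : K) (A : Fm K) : (A.subst1 x a).size ≤ A.size :=
  size_msubst_le _ A


/-- `∀A`, the universal closure of `A`. -/
noncomputable def univClosure (A : Fm K) : Fm K :=
  (A.fvar.sort (· ≤ ·)).foldr Fm.all A

theorem size_foldr_all (l : List ℕ) (A : Fm K) :
    (l.foldr Fm.all A).size = A.size + l.length := by
  induction l with
  | nil => simp
  | cons z l ih => simp only [List.foldr, size, ih, List.length_cons]; omega

theorem size_univClosure (A : Fm K) :
    A.univClosure.size = A.size + A.fvar.card := by
  simp [univClosure, size_foldr_all, Finset.length_sort]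

end Fm

/-- Embedding plain FOLP formulas into `K`-formulas. -/
noncomputable def toK {K : Type} : Fm Empty → Fm K := Fm.kmap (fun a => a.elim)

/-- Two FOLP formulas are variable variants if each can be turned into the other
by a renaming of free and bound individual variables. -/
def VariableVariant (A B : Fm Empty) : Prop := ∃ σ : Equiv.Perm ℕ, B = A.rename σ

/-- The axioms of FOLP: a complete list of first order axiom schemes together
with the justification axiom schemes Ctr, Exp, Sum, jK, jT, j4, Gen. -/
inductive FOLPAxiom : Fm Empty → Prop
  | p1 (A B : Fm Empty) : FOLPAxiom (A.imp (B.imp A))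
  | p2 (A B C : Fm Empty) : FOLPAxiom ((A.imp (B.imp C)).imp ((A.imp B).imp (A.imp C)))
  | p3 (A B : Fm Empty) : FOLPAxiom (((A.neg).imp (B.neg)).imp (B.imp A))
  | allElim (x y : ℕ) (A : Fm Empty) : Fm.FreeFor y x A → FOLPAxiom ((Fm.all x A).imp (A.vsubst x y))
  | allImp (x : ℕ) (A B : Fm Empty) : x ∉ A.fvar →
      FOLPAxiom ((Fm.all x (A.imp B)).imp (A.imp (Fm.all x B)))
  | exIntro (x y : ℕ) (A : Fm Empty) : Fm.FreeFor y x A → FOLPAxiom ((A.vsubst x y).imp (Fm.ex x A))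
  | exElim (x : ℕ) (A B : Fm Empty) : x ∉ B.fvar →
      FOLPAxiom ((Fm.all x (A.imp B)).imp ((Fm.ex x A).imp B))
  | ctr (t : Tm) (X : Finset (ℕ ⊕ Empty)) (A : Fm Empty) (y : ℕ) : Sum.inl y ∉ X → y ∉ A.fvar →
      FOLPAxiom ((Fm.just t (insert (Sum.inl y) X) A).imp (Fm.just t X A))
  | exp (t : Tm) (X : Finset (ℕ ⊕ Empty)) (A : Fm Empty) (y : ℕ) : Sum.inl y ∉ X →
      FOLPAxiom ((Fm.just t X A).imp (Fm.just t (insert (Sum.inl y) X) A))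
  | sum1 (s t : Tm) (X : Finset (ℕ ⊕ Empty)) (A : Fm Empty) : FOLPAxiom ((Fm.just s X A).imp (Fm.just (Tm.plus s t) X A))
  | sum2 (s t : Tm) (X : Finset (ℕ ⊕ Empty)) (A : Fm Empty) : FOLPAxiom ((Fm.just s X A).imp (Fm.just (Tm.plus t s) X A))
  | jK (s t : Tm) (X : Finset (ℕ ⊕ Empty)) (A B : Fm Empty) : FOLPAxiom ((Fm.just s X (A.imp B)).imp
      ((Fm.just t X A).imp (Fm.just (Tm.app s t) X B)))
  | jT (t : Tm) (X : Finset (ℕ ⊕ Empty)) (A : Fm Empty) : FOLPAxiom ((Fm.just t X A).imp A)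
  | j4 (t : Tm) (X : Finset (ℕ ⊕ Empty)) (A : Fm Empty) : FOLPAxiom ((Fm.just t X A).imp (Fm.just (Tm.bang t) X (Fm.just t X A)))
  | gen (t : Tm) (X : Finset (ℕ ⊕ Empty)) (A : Fm Empty) (x : ℕ) : Sum.inl x ∉ X →
      FOLPAxiom ((Fm.just t X A).imp (Fm.just (Tm.gen x t) X (Fm.all x A)))

/-- A constant specification is a set of pairs `(c, A)`, read `c : A`
(that is, `c :_∅ A`), where `A` is an axiom instance. -/
def ConstantSpec (CS : Set (ℕ × Fm Empty)) : Prop := ∀ p ∈ CS, FOLPAxiom p.2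

/-- `CS` is axiomatically appropriate: every axiom instance has a constant justifying it. -/
def AxiomaticallyAppropriate (CS : Set (ℕ × Fm Empty)) : Prop :=
  ∀ A, FOLPAxiom A → ∃ c, (c, A) ∈ CS

/-- `CS` is variant closed. -/
def VariantClosed (CS : Set (ℕ × Fm Empty)) : Prop :=
  ∀ c A B, VariableVariant A B → ((c, A) ∈ CS ↔ (c, B) ∈ CS)

/-- Derivability in the axiomatic system `FOLP_CS`:  axioms, axiom necessitation
restricted to `CS`, modus ponens, and universal generalization. -/
inductive Deriv (CS : Set (ℕ × Fm Empty)) : Fm Empty → Prop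
  | ax {A : Fm Empty} : FOLPAxiom A → Deriv CS A
  | an {c : ℕ} {A : Fm Empty} : (c, A) ∈ CS → Deriv CS (Fm.just (Tm.jconst c) ∅ A)
  | mp {A B : Fm Empty} : Deriv CS (A.imp B) → Deriv CS A → Deriv CS B
  | ug {A : Fm Empty} (x : ℕ) : Deriv CS A → Deriv CS (Fm.all x A)

/-- A Mkrtychev model of `FOLP_CS` with domain `D`:  an interpretation `I` of the
predicate symbols and an admissible evidence function `E` satisfying E1–E6. -/
structure MModel (CS : Set (ℕ × Fm Empty)) (D : Type) : Type where
  dom_nonempty : Nonempty D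
  I : ℕ → Set (List D)
  E : Tm → Set (Fm D)
  e1 : ∀ c A, (c, A) ∈ CS → toK A ∈ E (Tm.jconst c)
  e2 : ∀ s t (A B : Fm D), Fm.imp A B ∈ E s → A ∈ E t → B ∈ E (Tm.app s t)
  e3 : ∀ s t, E s ∪ E t ⊆ E (Tm.plus s t)
  e4 : ∀ t (A : Fm D) (X : Finset D), A ∈ E t → A.kocc ⊆ X →
      Fm.just t (X.image Sum.inr) A ∈ E (Tm.bang t)
  e5 : ∀ t (x : ℕ) (A : Fm D), A ∈ E t → Fm.all x A ∈ E (Tm.gen x t)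
  e6 : ∀ t (A : Fm D) (x : ℕ) (a : D), A ∈ E t → A.subst1 x a ∈ E t

/-- Truth of a (closed) `D`-formula in a Mkrtychev model. -/
noncomputable def MModel.Sat {CS : Set (ℕ × Fm Empty)} {D : Type} (M : MModel CS D) :
    Fm D → Prop
  | .pred Q args => ∃ as : List D, args = as.map Sum.inr ∧ as ∈ M.I Q
  | .neg A => ¬ M.Sat A
  | .imp A B => M.Sat A → M.Sat B
  | .all x A => ∀ a : D, M.Sat (A.subst1 x a)
  | .ex x A => ∃ a : D, M.Sat (A.subst1 x a)
  | .just t _ A => A ∈ M.E t ∧ M.Sat A.univClosure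
  termination_by F => F.size
  decreasing_by
    all_goals simp only [Fm.size, Fm.size_univClosure]
    all_goals first
      | omega
      | exact Nat.lt_succ_of_le (Fm.size_subst1_le _ _ _)

/-- Truth of an FOLP sentence in a Mkrtychev model. -/
noncomputable def MModel.SatSentence {CS : Set (ℕ × Fm Empty)} {D : Type}
    (M : MModel CS D) (F : Fm Empty) : Prop := M.Sat (toK F)

/-- A sentence is `FOLP_CS`-valid if it is true in every Mkrtychev model of `FOLP_CS`. -/
def FOLPValid (CS : Set (ℕ × Fm Empty)) (F : Fm Empty) : Prop :=
  ∀ (D : Type) (M : MModel CS D), M.SatSentence F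

/-- Satisfiability of a closed Par-formula `A(u₁,…,uₙ)` in a model:
`M ⊩ A(a₁,…,aₙ)` for some `a₁,…,aₙ ∈ D`. -/
noncomputable def MModel.SatPar {CS : Set (ℕ × Fm Empty)} {D : Type}
    (M : MModel CS D) (F : Fm ℕ) : Prop :=
  ∃ g : ℕ → D, M.Sat (F.kmap g)

/-- `X ⊆ Par`: the set `X` consists of parameters only. -/
def XPar (X : Finset (ℕ ⊕ ℕ)) : Prop := ∀ s ∈ X, ∃ u : ℕ, s = Sum.inr u

/-- One application of an FOLP tableau rule to a branch (represented by the set `S`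
of closed Par-formulas occurring on it), producing the list of extended branches
(one branch for a non-branching rule, two for a branching rule). -/
inductive TabRule : Set (Fm ℕ) → List (Set (Fm ℕ)) → Prop
  | fneg {S A} : Fm.neg (Fm.neg A) ∈ S → TabRule S [insert A S]
  | timp {S A B} : Fm.imp A B ∈ S → TabRule S [insert (Fm.neg A) S, insert B S]
  | fimp {S A B} : Fm.neg (Fm.imp A B) ∈ S → TabRule S [insert A (insert (Fm.neg B) S)]
  | tall {S x A} (u : ℕ) : Fm.all x A ∈ S → TabRule S [insert (A.subst1 x u) S]
  | fex {S x A} (u : ℕ) : Fm.neg (Fm.ex x A) ∈ S →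
      TabRule S [insert (Fm.neg (A.subst1 x u)) S]
  | tex {S x A} (u : ℕ) : Fm.ex x A ∈ S → (∀ F ∈ S, u ∉ F.kocc) →
      TabRule S [insert (A.subst1 x u) S]
  | fall {S x A} (u : ℕ) : Fm.neg (Fm.all x A) ∈ S → (∀ F ∈ S, u ∉ F.kocc) →
      TabRule S [insert (Fm.neg (A.subst1 x u)) S]
  | tcolon {S t X A} : Fm.just t X A ∈ S → XPar X → TabRule S [insert A.univClosure S]
  | fplus {S t s X A} : Fm.neg (Fm.just (Tm.plus t s) X A) ∈ S → XPar X →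
      TabRule S [insert (Fm.neg (Fm.just t X A)) (insert (Fm.neg (Fm.just s X A)) S)]
  | fapp {S s t X B} (A : Fm ℕ) : Fm.neg (Fm.just (Tm.app s t) X B) ∈ S → XPar X →
      (∀ u ∈ A.kocc, Sum.inr u ∈ X) →
      TabRule S [insert (Fm.neg (Fm.just s X (A.imp B))) S,
                 insert (Fm.neg (Fm.just t X A)) S]
  | fbang {S t X A} : Fm.neg (Fm.just (Tm.bang t) X (Fm.just t X A)) ∈ S → XPar X →
      TabRule S [insert (Fm.neg (Fm.just t X A)) S]
  | ctr {S t X A} (u : ℕ) : Fm.neg (Fm.just t X A) ∈ S → XPar X → Sum.inr u ∉ X →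
      TabRule S [insert (Fm.neg (Fm.just t (insert (Sum.inr u) X) A)) S]
  | exp {S t X A} (u : ℕ) : Fm.neg (Fm.just t (insert (Sum.inr u) X) A) ∈ S →
      XPar X → Sum.inr u ∉ X → u ∉ A.kocc →
      TabRule S [insert (Fm.neg (Fm.just t X A)) S]
  | ins {S t X A} (x u : ℕ) : Fm.neg (Fm.just t X (A.subst1 x u)) ∈ S → XPar X →
      TabRule S [insert (Fm.neg (Fm.just t X A)) S]
  | genx {S t X A x} : Fm.neg (Fm.just (Tm.gen x t) X (Fm.all x A)) ∈ S → XPar X →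
      TabRule S [insert (Fm.neg (Fm.just t X A)) S]

/-- `ClosedTableau CS S`: there is a closed `FOLP_CS`-tableau beginning with the
formulas of `S`.  A branch closes if it contains both `A` and `¬A`, or contains
`¬c:A` with `c:A ∈ CS`. -/
inductive ClosedTableau (CS : Set (ℕ × Fm Empty)) : Set (Fm ℕ) → Prop
  | close {S A} : A ∈ S → Fm.neg A ∈ S → ClosedTableau CS S
  | closeCS {S c A} : (c, A) ∈ CS →
      Fm.neg (Fm.just (Tm.jconst c) ∅ (toK A)) ∈ S → ClosedTableau CS S
  | step {S l} : TabRule S l → (∀ S' ∈ l, ClosedTableau CS S') → ClosedTableau CS S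

/-- An `FOLP_CS`-tableau proof of the sentence `F`: a closed tableau beginning
with `¬F`. -/
def TabProof (CS : Set (ℕ × Fm Empty)) (F : Fm Empty) : Prop :=
  ClosedTableau CS {Fm.neg (toK F)}

/-- A set of closed Par-formulas is tableau `FOLP_CS`-consistent if no finite
subset of it has a closed `FOLP_CS`-tableau. -/
def TabConsistent (CS : Set (ℕ × Fm Empty)) (Γ : Set (Fm ℕ)) : Prop :=
  ∀ S : Set (Fm ℕ), S ⊆ Γ → S.Finite → ¬ ClosedTableau CS S

/-- `Γ` is maximal: it has no proper tableau consistent extension by closed Par-formulas. -/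
def MaximalCons (CS : Set (ℕ × Fm Empty)) (Γ : Set (Fm ℕ)) : Prop :=
  TabConsistent CS Γ ∧
    ∀ Δ : Set (Fm ℕ), Γ ⊆ Δ → (∀ F ∈ Δ, F.Closed) → TabConsistent CS Δ → Δ = Γ

/-- `Γ` is E-complete (with parameters as witnesses). -/
def EComplete (Γ : Set (Fm ℕ)) : Prop :=
  (∀ (x : ℕ) (A : Fm ℕ), Fm.ex x A ∈ Γ → ∃ u : ℕ, A.subst1 x u ∈ Γ) ∧
  (∀ (x : ℕ) (A : Fm ℕ), Fm.neg (Fm.all x A) ∈ Γ → ∃ u : ℕ, Fm.neg (A.subst1 x u) ∈ Γ)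

/-- The interpretation of the canonical model determined by `Γ`:
`I(Q) = { (u₁,…,uₙ) | Q(u₁,…,uₙ) ∈ Γ }`. -/
def canI (Γ : Set (Fm ℕ)) (Q : ℕ) : Set (List ℕ) :=
  {us | Fm.pred Q (us.map Sum.inr) ∈ Γ}

/-- The evidence function of the canonical model determined by `Γ`:
`E(t) = { A | ¬ t:_{Par(A)} A ∉ Γ }`. -/
def canE (Γ : Set (Fm ℕ)) (t : Tm) : Set (Fm ℕ) :=
  {A | Fm.neg (Fm.just t (A.kocc.image Sum.inr) A) ∉ Γ}

/-!
Maximality turns closure under a rule into a consistency argument. If `Γ` contains the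
premise of a rule but none of its alternatives, then each extension of `Γ` by an alternative
is inconsistent, witnessed by a closed tableau from finitely many formulas of `Γ` together
with that alternative. Applying the rule to the premise together with all these finitely many
formulas of `Γ` and continuing on each branch with the corresponding closed tableau closes a
tableau for a finite subset of `Γ`, which is impossible.

This requires closed tableaux to survive the addition of formulas. That holds only up to an
injective renaming of parameters, since (T∃) and (F∀) demand a parameter that is new to the
whole branch. The rules (T∃) and (F∀) themselves are exactly E-completeness.
-/

namespace Fm

variable {K K' K'' : Type}

@[simp] theorem kmap_neg (f : K → K') (A : Fm K) : (neg A).kmap f = neg (A.kmap f) := rfl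

@[simp] theorem kmap_imp (f : K → K') (A B : Fm K) :
    (imp A B).kmap f = imp (A.kmap f) (B.kmap f) := rfl

@[simp] theorem kmap_all (f : K → K') (x : ℕ) (A : Fm K) : (all x A).kmap f = all x (A.kmap f) :=
  rfl

@[simp] theorem kmap_ex (f : K → K') (x : ℕ) (A : Fm K) : (ex x A).kmap f = ex x (A.kmap f) := rfl

-- `kmap` builds `X.image` with the classical `DecidableEq` instance, whereas `TabRule` and the
-- lemmas below use the computable one; stating this for any instance lets `simp` bridge the two.
@[simp] theorem kmap_just [DecidableEq (ℕ ⊕ K')] (f : K → K') (t : Tm) (X : Finset (ℕ ⊕ K))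
    (A : Fm K) : (just t X A).kmap f = just t (X.image (Sum.map id f)) (A.kmap f) := by
  rw [kmap]
  congr
  exact Subsingleton.elim _ _

theorem mem_kocc_kmap {f : K → K'} {A : Fm K} {b : K'} :
    b ∈ (A.kmap f).kocc ↔ ∃ a ∈ A.kocc, f a = b := by
  induction A with
  | pred Q args => simp [kmap, kocc]
  | neg A ih | all _ A ih | ex _ A ih => simpa [kmap, kocc] using ih
  | imp A B ihA ihB => simp only [kmap, kocc, Finset.mem_union, ihA, ihB]; aesop
  | just t X A ih => simp [kmap, kocc, ih]; aesop

theorem fvar_kmap (f : K → K') (A : Fm K) : (A.kmap f).fvar = A.fvar := by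
  induction A with
  | pred Q args => ext; simp [kmap, fvar]
  | neg A ih | all _ A ih | ex _ A ih => simp [kmap, fvar, ih]
  | imp A B ihA ihB => simp [kmap, fvar, ihA, ihB]
  | just t X A ih => ext; simp [kmap, fvar]

theorem kmap_congr {f g : K → K'} (A : Fm K) (h : ∀ a ∈ A.kocc, f a = g a) :
    A.kmap f = A.kmap g := by
  induction A with
  | pred Q args =>
      simp only [kmap, kocc, List.mem_toFinset, List.mem_filterMap] at h ⊢
      aesop
  | neg A ih | all _ A ih | ex _ A ih => simp [kmap, ih (by simpa [kocc] using h)]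
  | imp A B ihA ihB => simp_all [kmap, kocc]
  | just t X A ih => simp_all [kmap, kocc]; aesop

theorem notMem_kocc_kmap {f : K → K'} (hf : f.Injective) {A : Fm K} {a : K} (h : a ∉ A.kocc) :
    f a ∉ (A.kmap f).kocc := by
  rw [mem_kocc_kmap]
  rintro ⟨b, hb, hba⟩
  exact h (hf hba ▸ hb)

theorem forall_mem_kocc_kmap {f : K → K'} {A : Fm K} {X : Finset (ℕ ⊕ K)}
    [DecidableEq (ℕ ⊕ K')] (h : ∀ a ∈ A.kocc, .inr a ∈ X) :
    ∀ b ∈ (A.kmap f).kocc, .inr b ∈ X.image (Sum.map id f) := by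
  intro b hb
  obtain ⟨a, ha, rfl⟩ := mem_kocc_kmap.1 hb
  exact Finset.mem_image_of_mem _ (h a ha)

theorem kmap_id (A : Fm K) : A.kmap id = A := by
  induction A with
  | pred Q args => simp [kmap]
  | neg A ih | all _ A ih | ex _ A ih => simp [kmap, ih]
  | imp A B ihA ihB => simp [kmap, ihA, ihB]
  | just t X A ih => simp [kmap, ih]

theorem kmap_kmap (f : K → K') (g : K' → K'') (A : Fm K) :
    (A.kmap f).kmap g = A.kmap (g ∘ f) := by
  induction A with
  | pred Q args => simp [kmap]
  | neg A ih | all _ A ih | ex _ A ih => simp [kmap, ih]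
  | imp A B ihA ihB => simp [kmap, ihA, ihB]
  | just t X A ih => simp [kmap, ih, Finset.image_image]

theorem kmap_toK (f : K → K') (A : Fm Empty) : (toK A).kmap f = toK A := by
  rw [toK, toK, kmap_kmap]
  congr 1
  funext a
  exact a.elim

theorem map_subK (f : K → K') (σ : ℕ → Option K) (s : ℕ ⊕ K) :
    Sum.map id f (subK σ s) = subK (fun y => (σ y).map f) (Sum.map id f s) := by
  rcases s with x | a
  · cases h : σ x <;> simp [subK, h]
  · rfl

theorem kmap_msubst (f : K → K') (σ : ℕ → Option K) (A : Fm K) :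
    (A.msubst σ).kmap f = (A.kmap f).msubst (fun y => (σ y).map f) := by
  induction A generalizing σ with
  | pred Q args => simp [msubst, kmap, map_subK]
  | neg A ih => simp [msubst, kmap, ih]
  | imp A B ihA ihB => simp [msubst, kmap, ihA, ihB]
  | all x A ih | ex x A ih => simp [msubst, kmap, ih, apply_ite (Option.map f)]
  | just t X A ih =>
      simp [msubst, kmap, ih, Finset.image_image, apply_ite (Option.map f), Function.comp_def, map_subK]

theorem kmap_subst1 (f : K → K') (x : ℕ) (u : K) (A : Fm K) :
    (A.subst1 x u).kmap f = (A.kmap f).subst1 x (f u) := by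
  simp [subst1, kmap_msubst, apply_ite (Option.map f)]

theorem kmap_univClosure (f : K → K') (A : Fm K) :
    A.univClosure.kmap f = (A.kmap f).univClosure := by
  rw [univClosure, univClosure, fvar_kmap]
  induction A.fvar.sort (· ≤ ·) with
  | nil => rfl
  | cons z l ih => simp [ih]

theorem kmap_swap_eq_self {A : Fm ℕ} {u w : ℕ} (hu : u ∉ A.kocc) (hw : w ∉ A.kocc) :
    A.kmap (Equiv.swap u w) = A := by
  refine (A.kmap_congr fun a ha => ?_).trans A.kmap_id
  exact Equiv.swap_apply_of_ne_of_ne (ne_of_mem_of_not_mem ha hu) (ne_of_mem_of_not_mem ha hw)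

theorem mem_fvar_foldr_all {l : List ℕ} {A : Fm K} {y : ℕ} :
    y ∈ (l.foldr Fm.all A).fvar ↔ y ∈ A.fvar ∧ y ∉ l := by
  induction l with
  | nil => simp
  | cons z l ih => simp only [List.foldr, fvar, Finset.mem_erase, ih, List.mem_cons]; tauto

theorem closed_univClosure (A : Fm K) : A.univClosure.Closed := by
  rw [Closed, univClosure, Finset.eq_empty_iff_forall_notMem]
  simp [mem_fvar_foldr_all]

theorem subK_ne_inl {σ : ℕ → Option K} {x : ℕ} (h : (σ x).isSome) (s : ℕ ⊕ K) :
    subK σ s ≠ .inl x := by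
  rcases s with y | a
  · cases hy : σ y <;> simp only [subK, hy, Option.elim, ne_eq, reduceCtorEq, not_false_eq_true,
      Sum.inl.injEq]
    rintro rfl
    simp [hy] at h
  · simp [subK]

theorem notMem_fvar_msubst {σ : ℕ → Option K} {x : ℕ} (A : Fm K) (h : (σ x).isSome) :
    x ∉ (A.msubst σ).fvar := by
  induction A generalizing σ with
  | pred Q args | just t X A => simpa [msubst, fvar] using fun s _ => subK_ne_inl h s
  | neg A ih => exact ih h
  | imp A B ihA ihB => simp [msubst, fvar, ihA h, ihB h]
  | all z A ih | ex z A ih => simpa [msubst, fvar] using fun hz => ih (by simpa [hz] using h)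

theorem closed_subst1 {A : Fm K} {x : ℕ} (h : A.fvar.erase x = ∅) (u : K) :
    (A.subst1 x u).Closed := by
  rw [Closed, Finset.eq_empty_iff_forall_notMem]
  intro y hy
  have hyx : y ≠ x := by
    rintro rfl
    exact notMem_fvar_msubst A (by simp) hy
  simpa [h] using Finset.mem_erase.2 ⟨hyx, fvar_msubst_subset _ A hy⟩

theorem closed_just_iff {t : Tm} {X : Finset (ℕ ⊕ ℕ)} {A : Fm ℕ} :
    (Fm.just t X A).Closed ↔ XPar X := by
  simp only [Fm.Closed, Fm.fvar, XPar, Finset.eq_empty_iff_forall_notMem, List.mem_toFinset,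
    List.mem_filterMap, Finset.mem_toList, not_exists, not_and]
  constructor
  · rintro h (x | u) hs
    · exact absurd rfl (h x _ hs)
    · exact ⟨u, rfl⟩
  · rintro h x s hs
    obtain ⟨u, rfl⟩ := h s hs
    simp

theorem closed_neg_just_iff {t : Tm} {X : Finset (ℕ ⊕ ℕ)} {A : Fm ℕ} :
    (Fm.neg (Fm.just t X A)).Closed ↔ XPar X :=
  closed_just_iff (t := t) (A := A)

theorem closed_neg_iff {A : Fm ℕ} : (Fm.neg A).Closed ↔ A.Closed := Iff.rfl

theorem closed_imp_iff {A B : Fm ℕ} : (Fm.imp A B).Closed ↔ A.Closed ∧ B.Closed :=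
  Finset.union_eq_empty

end Fm

theorem XPar.insert_inr {X : Finset (ℕ ⊕ ℕ)} (h : XPar X) (u : ℕ) : XPar (insert (.inr u) X) := by
  simpa [XPar] using h

theorem XPar.of_insert {X : Finset (ℕ ⊕ ℕ)} {s : ℕ ⊕ ℕ} (h : XPar (insert s X)) : XPar X :=
  fun s' hs' => h s' (Finset.mem_insert_of_mem hs')

theorem XPar.image {X : Finset (ℕ ⊕ ℕ)} (h : XPar X) (f : ℕ → ℕ) :
    XPar (X.image (Sum.map id f)) := by
  simp only [XPar, Finset.mem_image]
  rintro _ ⟨s, hs, rfl⟩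
  obtain ⟨u, rfl⟩ := h s hs
  exact ⟨f u, rfl⟩

theorem Set.Finite.exists_notMem_kocc {S : Set (Fm ℕ)} (hS : S.Finite) :
    ∃ w, ∀ F ∈ S, w ∉ F.kocc := by
  obtain ⟨w, hw⟩ := _root_.Infinite.exists_notMem_finset (hS.toFinset.biUnion Fm.kocc)
  exact ⟨w, fun F hF hwF => hw (Finset.mem_biUnion.2 ⟨F, hS.mem_toFinset.2 hF, hwF⟩)⟩

theorem TabRule.kmap {f : ℕ → ℕ} (hf : f.Injective) {S : Set (Fm ℕ)} {l : List (Set (Fm ℕ))}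
    (h : TabRule S l) : TabRule (Fm.kmap f '' S) (l.map (Set.image (Fm.kmap f))) := by
  have fresh : ∀ {u : ℕ}, (∀ F ∈ S, u ∉ F.kocc) → ∀ F ∈ Fm.kmap f '' S, f u ∉ F.kocc := by
    rintro u hu _ ⟨F, hF, rfl⟩
    exact Fm.notMem_kocc_kmap hf (hu F hF)
  have mem : ∀ {F}, F ∈ S → F.kmap f ∈ Fm.kmap f '' S := Set.mem_image_of_mem _
  have hmap : (Sum.map (id : ℕ → ℕ) f).Injective := Function.injective_id.sumMap hf
  cases h with
  | fneg hP => simpa [Set.image_insert_eq] using TabRule.fneg (mem hP)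
  | timp hP => simpa [Set.image_insert_eq] using TabRule.timp (mem hP)
  | fimp hP => simpa [Set.image_insert_eq] using TabRule.fimp (mem hP)
  | tall u hP => simpa [Set.image_insert_eq, Fm.kmap_subst1] using TabRule.tall (f u) (mem hP)
  | fex u hP => simpa [Set.image_insert_eq, Fm.kmap_subst1] using TabRule.fex (f u) (mem hP)
  | tex u hP hu =>
      simpa [Set.image_insert_eq, Fm.kmap_subst1] using TabRule.tex (f u) (mem hP) (fresh hu)
  | fall u hP hu =>
      simpa [Set.image_insert_eq, Fm.kmap_subst1] using TabRule.fall (f u) (mem hP) (fresh hu)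
  | tcolon hP hX =>
      simpa [Set.image_insert_eq, Fm.kmap_univClosure] using
        TabRule.tcolon (by simpa using mem hP) (hX.image f)
  | fplus hP hX =>
      simpa [Set.image_insert_eq] using TabRule.fplus (by simpa using mem hP) (hX.image f)
  | fapp A hP hX hA =>
      simpa [Set.image_insert_eq] using TabRule.fapp (A.kmap f) (by simpa using mem hP)
        (hX.image f) (Fm.forall_mem_kocc_kmap hA)
  | fbang hP hX =>
      simpa [Set.image_insert_eq] using TabRule.fbang (by simpa using mem hP) (hX.image f)
  | ctr u hP hX hu =>
      simpa [Set.image_insert_eq] using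
        TabRule.ctr (f u) (by simpa using mem hP) (hX.image f) (hmap.mem_finset_image.not.2 hu)
  | exp u hP hX hu hA =>
      simpa [Set.image_insert_eq] using
        TabRule.exp (f u) (by simpa using mem hP) (hX.image f) (hmap.mem_finset_image.not.2 hu)
          (Fm.notMem_kocc_kmap hf hA)
  | ins x u hP hX =>
      simpa [Set.image_insert_eq] using
        TabRule.ins x (f u) (by simpa [Fm.kmap_subst1] using mem hP) (hX.image f)
  | genx hP hX =>
      simpa [Set.image_insert_eq] using TabRule.genx (by simpa using mem hP) (hX.image f)

theorem TabRule.finite {S : Set (Fm ℕ)} {l : List (Set (Fm ℕ))} (h : TabRule S l)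
    (hS : S.Finite) : ∀ R ∈ l, R.Finite := by
  cases h <;> simp [hS]

def RenamesInto (S S' : Set (Fm ℕ)) : Prop :=
  ∃ f : ℕ → ℕ, f.Injective ∧ Fm.kmap f '' S ⊆ S'

namespace RenamesInto

variable {S S' S'' : Set (Fm ℕ)}

theorem of_subset (h : S ⊆ S') : RenamesInto S S' :=
  ⟨id, Function.injective_id, by simpa [funext Fm.kmap_id] using h⟩

theorem image {f : ℕ → ℕ} (hf : f.Injective) (S : Set (Fm ℕ)) : RenamesInto S (Fm.kmap f '' S) :=
  ⟨f, hf, subset_rfl⟩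

theorem trans (h₁ : RenamesInto S S') (h₂ : RenamesInto S' S'') : RenamesInto S S'' := by
  obtain ⟨f, hf, hS⟩ := h₁
  obtain ⟨g, hg, hS'⟩ := h₂
  refine ⟨g ∘ f, hg.comp hf, ?_⟩
  rintro _ ⟨F, hF, rfl⟩
  rw [← Fm.kmap_kmap]
  exact hS' ⟨_, hS ⟨F, hF, rfl⟩, rfl⟩

theorem insert_swap {u w : ℕ} (hu : ∀ F ∈ S, u ∉ F.kocc) (hw : ∀ F ∈ S', w ∉ F.kocc)
    (hsub : S ⊆ S') (B : Fm ℕ) :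
    RenamesInto (insert B S) (insert (B.kmap (Equiv.swap u w)) S') := by
  refine ⟨Equiv.swap u w, (Equiv.swap u w).injective, ?_⟩
  rw [Set.image_insert_eq]
  refine Set.insert_subset_insert ?_
  rintro _ ⟨F, hF, rfl⟩
  rw [Fm.kmap_swap_eq_self (hu F hF) (hw F (hsub hF))]
  exact hsub hF

end RenamesInto

theorem TabRule.exists_renamesInto_of_subset {S S' : Set (Fm ℕ)} {l : List (Set (Fm ℕ))}
    (h : TabRule S l) (hsub : S ⊆ S') (hfin : S'.Finite) :
    ∃ l', TabRule S' l' ∧ ∀ R' ∈ l', ∃ R ∈ l, RenamesInto R R' := by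
  have hins : ∀ A, RenamesInto (insert A S) (insert A S') :=
    fun A => .of_subset (Set.insert_subset_insert hsub)
  have hins₂ : ∀ A B, RenamesInto (insert A (insert B S)) (insert A (insert B S')) :=
    fun A B => .of_subset (Set.insert_subset_insert (Set.insert_subset_insert hsub))
  -- In (T∃) and (F∀) the parameter `u` is new to `S` but maybe not to `S'`: rename it to a
  -- parameter `w` new to `S'`.
  obtain ⟨w, hw⟩ := hfin.exists_notMem_kocc
  cases h with
  | fneg hP => exact ⟨_, .fneg (hsub hP), by simp [hins]⟩
  | timp hP => exact ⟨_, .timp (hsub hP), by simp [hins]⟩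
  | fimp hP => exact ⟨_, .fimp (hsub hP), by simp [hins₂]⟩
  | tall u hP => exact ⟨_, .tall u (hsub hP), by simp [hins]⟩
  | fex u hP => exact ⟨_, .fex u (hsub hP), by simp [hins]⟩
  | @tex x A u hP hu =>
      refine ⟨_, .tex w (hsub hP) hw, ?_⟩
      have hA : A.kmap (Equiv.swap u w) = A :=
        Fm.kmap_swap_eq_self (hu (.ex x A) hP) (hw (.ex x A) (hsub hP))
      simpa [Fm.kmap_subst1, hA] using RenamesInto.insert_swap hu hw hsub (A.subst1 x u)
  | @fall x A u hP hu =>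
      refine ⟨_, .fall w (hsub hP) hw, ?_⟩
      have hA : A.kmap (Equiv.swap u w) = A :=
        Fm.kmap_swap_eq_self (hu (.neg (.all x A)) hP) (hw (.neg (.all x A)) (hsub hP))
      simpa [Fm.kmap_subst1, hA] using RenamesInto.insert_swap hu hw hsub (A.subst1 x u).neg
  | tcolon hP hX => exact ⟨_, .tcolon (hsub hP) hX, by simp [hins]⟩
  | fplus hP hX => exact ⟨_, .fplus (hsub hP) hX, by simp [hins₂]⟩
  | fapp A hP hX hA => exact ⟨_, .fapp A (hsub hP) hX hA, by simp [hins]⟩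
  | fbang hP hX => exact ⟨_, .fbang (hsub hP) hX, by simp [hins]⟩
  | ctr u hP hX hu => exact ⟨_, .ctr u (hsub hP) hX hu, by simp [hins]⟩
  | exp u hP hX hu hA => exact ⟨_, .exp u (hsub hP) hX hu hA, by simp [hins]⟩
  | ins x u hP hX => exact ⟨_, .ins x u (hsub hP) hX, by simp [hins]⟩
  | genx hP hX => exact ⟨_, .genx (hsub hP) hX, by simp [hins]⟩

theorem ClosedTableau.of_renamesInto {CS : Set (ℕ × Fm Empty)} {S S' : Set (Fm ℕ)}
    (h : ClosedTableau CS S) (hS : RenamesInto S S') (hfin : S'.Finite) :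
    ClosedTableau CS S' := by
  induction h generalizing S' with
  | close hA hnA =>
      obtain ⟨f, -, hsub⟩ := hS
      exact .close (hsub ⟨_, hA, rfl⟩) (hsub ⟨_, hnA, rfl⟩)
  | closeCS hcs hmem =>
      obtain ⟨f, -, hsub⟩ := hS
      exact .closeCS hcs (by simpa [Fm.kmap_toK] using hsub ⟨_, hmem, rfl⟩)
  | step hrule _ ih =>
      obtain ⟨f, hf, hsub⟩ := hS
      obtain ⟨l', hrule', hl'⟩ := (hrule.kmap hf).exists_renamesInto_of_subset hsub hfin
      refine .step hrule' fun R' hR' => ?_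
      obtain ⟨_, hR₁, hRR'⟩ := hl' R' hR'
      obtain ⟨R, hR, rfl⟩ := List.mem_map.1 hR₁
      exact ih R hR ((RenamesInto.image hf R).trans hRR') (hrule'.finite hfin R' hR')

theorem ClosedTableau.mono {CS : Set (ℕ × Fm Empty)} {S S' : Set (Fm ℕ)}
    (h : ClosedTableau CS S) (hsub : S ⊆ S') (hfin : S'.Finite) : ClosedTableau CS S' :=
  h.of_renamesInto (.of_subset hsub) hfin

namespace MaximalCons

variable {CS : Set (ℕ × Fm Empty)} {Γ : Set (Fm ℕ)}

theorem subset_of_tabConsistent (hmax : MaximalCons CS Γ) (hclosed : ∀ F ∈ Γ, F.Closed)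
    {C : Set (Fm ℕ)} (hC : ∀ F ∈ C, F.Closed) (hcons : TabConsistent CS (C ∪ Γ)) : C ⊆ Γ := by
  have hΓ := hmax.2 (C ∪ Γ) Set.subset_union_right
    (fun F hF => hF.elim (hC F) (hclosed F)) hcons
  exact hΓ ▸ Set.subset_union_left

theorem exists_closedTableau_union_of_not_tabConsistent {C : Set (Fm ℕ)} (hC : C.Finite)
    (h : ¬ TabConsistent CS (C ∪ Γ)) :
    ∃ S ⊆ Γ, S.Finite ∧ ClosedTableau CS (C ∪ S) := by
  simp only [TabConsistent, not_forall, not_not] at h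
  obtain ⟨S₀, hS₀, hfin, hct⟩ := h
  have hfin' : (S₀ ∩ Γ).Finite := hfin.inter_of_left Γ
  refine ⟨S₀ ∩ Γ, Set.inter_subset_right, hfin', hct.mono (fun F hF => ?_) (hC.union hfin')⟩
  exact (hS₀ hF).imp id fun hFΓ => ⟨hF, hFΓ⟩

theorem exists_subset_of_rule (hmax : MaximalCons CS Γ) (hclosed : ∀ F ∈ Γ, F.Closed)
    {P : Fm ℕ} (hP : P ∈ Γ) (Cs : List (Set (Fm ℕ)))
    (hCs : ∀ C ∈ Cs, C.Finite ∧ ∀ F ∈ C, F.Closed)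
    (hrule : ∀ S, P ∈ S → TabRule S (Cs.map (· ∪ S))) :
    ∃ C ∈ Cs, C ⊆ Γ := by
  by_contra! hnot
  have : ∀ C ∈ Cs, ∃ S ⊆ Γ, S.Finite ∧ ClosedTableau CS (C ∪ S) := fun C hC =>
    exists_closedTableau_union_of_not_tabConsistent (hCs C hC).1 fun hcons =>
      hnot C hC (hmax.subset_of_tabConsistent hclosed (hCs C hC).2 hcons)
  choose! S hSΓ hSfin hSct using this
  set S₀ := insert P (⋃ C ∈ Cs, S C)
  have hS₀fin : S₀.Finite := (Cs.finite_toSet.biUnion hSfin).insert P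
  refine hmax.1 S₀ (Set.insert_subset hP (Set.iUnion₂_subset hSΓ)) hS₀fin
    (.step (hrule S₀ (Set.mem_insert P _)) ?_)
  simp only [List.mem_map]
  rintro _ ⟨C, hC, rfl⟩
  refine (hSct C hC).mono (Set.union_subset_union_right C ?_) ((hCs C hC).1.union hS₀fin)
  exact (Set.subset_iUnion₂ (s := fun C (_ : C ∈ Cs) => S C) C hC).trans (Set.subset_insert P _)

theorem mem_of_rule (hmax : MaximalCons CS Γ) (hclosed : ∀ F ∈ Γ, F.Closed) {P α : Fm ℕ}
    (hP : P ∈ Γ) (hα : α.Closed) (hrule : ∀ S, P ∈ S → TabRule S [insert α S]) : α ∈ Γ := by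
  obtain ⟨C, hC, hCΓ⟩ := hmax.exists_subset_of_rule hclosed hP [{α}] (by simpa using hα)
    (by simpa using hrule)
  simp only [List.mem_singleton] at hC
  exact hCΓ (hC ▸ rfl)

theorem mem_and_mem_of_rule (hmax : MaximalCons CS Γ) (hclosed : ∀ F ∈ Γ, F.Closed)
    {P α₁ α₂ : Fm ℕ} (hP : P ∈ Γ) (hα₁ : α₁.Closed) (hα₂ : α₂.Closed)
    (hrule : ∀ S, P ∈ S → TabRule S [insert α₁ (insert α₂ S)]) : α₁ ∈ Γ ∧ α₂ ∈ Γ := by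
  obtain ⟨C, hC, hCΓ⟩ := hmax.exists_subset_of_rule hclosed hP [{α₁, α₂}]
    (by simp [hα₁, hα₂]) (by simpa [Set.insert_union] using hrule)
  simp only [List.mem_singleton] at hC
  subst hC
  exact ⟨hCΓ (by simp), hCΓ (by simp)⟩

theorem mem_or_mem_of_rule (hmax : MaximalCons CS Γ) (hclosed : ∀ F ∈ Γ, F.Closed)
    {P β₁ β₂ : Fm ℕ} (hP : P ∈ Γ) (hβ₁ : β₁.Closed) (hβ₂ : β₂.Closed)
    (hrule : ∀ S, P ∈ S → TabRule S [insert β₁ S, insert β₂ S]) : β₁ ∈ Γ ∨ β₂ ∈ Γ := by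
  obtain ⟨C, hC, hCΓ⟩ := hmax.exists_subset_of_rule hclosed hP [{β₁}, {β₂}]
    (by simp [hβ₁, hβ₂]) (by simpa using hrule)
  simp only [List.mem_cons, List.not_mem_nil, or_false] at hC
  rcases hC with rfl | rfl
  · exact Or.inl (hCΓ rfl)
  · exact Or.inr (hCΓ rfl)

end MaximalCons

theorem mcs_closed_under_tableau_rules_general
    (CS : Set (ℕ × Fm Empty))
    (Γ : Set (Fm ℕ)) (hclosed : ∀ F ∈ Γ, F.Closed)
    (hmax : MaximalCons CS Γ) (hE : EComplete Γ) :
    -- (F¬)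
    (∀ A : Fm ℕ, Fm.neg (Fm.neg A) ∈ Γ → A ∈ Γ) ∧
    -- (T→)
    (∀ A B : Fm ℕ, Fm.imp A B ∈ Γ → Fm.neg A ∈ Γ ∨ B ∈ Γ) ∧
    -- (F→)
    (∀ A B : Fm ℕ, Fm.neg (Fm.imp A B) ∈ Γ → A ∈ Γ ∧ Fm.neg B ∈ Γ) ∧
    -- (T∀)
    (∀ (x : ℕ) (A : Fm ℕ) (u : ℕ), Fm.all x A ∈ Γ → A.subst1 x u ∈ Γ) ∧
    -- (F∃)
    (∀ (x : ℕ) (A : Fm ℕ) (u : ℕ), Fm.neg (Fm.ex x A) ∈ Γ →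
      Fm.neg (A.subst1 x u) ∈ Γ) ∧
    -- (T∃)
    (∀ (x : ℕ) (A : Fm ℕ), Fm.ex x A ∈ Γ → ∃ u : ℕ, A.subst1 x u ∈ Γ) ∧
    -- (F∀)
    (∀ (x : ℕ) (A : Fm ℕ), Fm.neg (Fm.all x A) ∈ Γ →
      ∃ u : ℕ, Fm.neg (A.subst1 x u) ∈ Γ) ∧
    -- (T:)
    (∀ (t : Tm) (X : Finset (ℕ ⊕ ℕ)) (A : Fm ℕ), Fm.just t X A ∈ Γ →
      A.univClosure ∈ Γ) ∧
    -- (F+)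
    (∀ (t s : Tm) (X : Finset (ℕ ⊕ ℕ)) (A : Fm ℕ),
      Fm.neg (Fm.just (Tm.plus t s) X A) ∈ Γ →
      Fm.neg (Fm.just t X A) ∈ Γ ∧ Fm.neg (Fm.just s X A) ∈ Γ) ∧
    -- (F·)
    (∀ (s t : Tm) (X : Finset (ℕ ⊕ ℕ)) (B : Fm ℕ),
      Fm.neg (Fm.just (Tm.app s t) X B) ∈ Γ →
      ∀ A : Fm ℕ, (∀ u ∈ A.kocc, Sum.inr u ∈ X) →
        Fm.neg (Fm.just s X (A.imp B)) ∈ Γ ∨ Fm.neg (Fm.just t X A) ∈ Γ) ∧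
    -- (F!)
    (∀ (t : Tm) (X : Finset (ℕ ⊕ ℕ)) (A : Fm ℕ),
      Fm.neg (Fm.just (Tm.bang t) X (Fm.just t X A)) ∈ Γ →
      Fm.neg (Fm.just t X A) ∈ Γ) ∧
    -- (Ctr)
    (∀ (t : Tm) (X : Finset (ℕ ⊕ ℕ)) (A : Fm ℕ) (u : ℕ),
      Fm.neg (Fm.just t X A) ∈ Γ → Sum.inr u ∉ X →
      Fm.neg (Fm.just t (insert (Sum.inr u) X) A) ∈ Γ) ∧
    -- (Exp)
    (∀ (t : Tm) (X : Finset (ℕ ⊕ ℕ)) (A : Fm ℕ) (u : ℕ),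
      Fm.neg (Fm.just t (insert (Sum.inr u) X) A) ∈ Γ → Sum.inr u ∉ X →
      u ∉ A.kocc → Fm.neg (Fm.just t X A) ∈ Γ) ∧
    -- (Ins)
    (∀ (t : Tm) (X : Finset (ℕ ⊕ ℕ)) (A : Fm ℕ) (x u : ℕ),
      Fm.neg (Fm.just t X (A.subst1 x u)) ∈ Γ → Fm.neg (Fm.just t X A) ∈ Γ) ∧
    -- (gen_x)
    (∀ (t : Tm) (X : Finset (ℕ ⊕ ℕ)) (A : Fm ℕ) (x : ℕ),
      Fm.neg (Fm.just (Tm.gen x t) X (Fm.all x A)) ∈ Γ →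
      Fm.neg (Fm.just t X A) ∈ Γ) := by
  have hX : ∀ {t X A}, Fm.neg (Fm.just t X A) ∈ Γ → XPar X :=
    fun h => Fm.closed_neg_just_iff.1 (hclosed _ h)
  have hJ : ∀ {t X A}, XPar X → (Fm.neg (Fm.just t X A)).Closed := Fm.closed_neg_just_iff.2
  refine ⟨fun A h => ?_, fun A B h => ?_, fun A B h => ?_, fun x A u h => ?_, fun x A u h => ?_,
    hE.1, hE.2, fun t X A h => ?_, fun t s X A h => ?_, fun s t X B h A hA => ?_,
    fun t X A h => ?_, fun t X A u h hu => ?_, fun t X A u h hu hA => ?_,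
    fun t X A x u h => ?_, fun t X A x h => ?_⟩
  · exact hmax.mem_of_rule hclosed h (Fm.closed_neg_iff.1 (Fm.closed_neg_iff.1 (hclosed _ h)))
      fun _ => .fneg
  · have hAB := Fm.closed_imp_iff.1 (hclosed _ h)
    exact hmax.mem_or_mem_of_rule hclosed h (Fm.closed_neg_iff.2 hAB.1) hAB.2 fun _ => .timp
  · have hAB := Fm.closed_imp_iff.1 (Fm.closed_neg_iff.1 (hclosed _ h))
    exact hmax.mem_and_mem_of_rule hclosed h hAB.1 (Fm.closed_neg_iff.2 hAB.2) fun _ => .fimp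
  · exact hmax.mem_of_rule hclosed h (Fm.closed_subst1 (hclosed _ h) u) fun _ => .tall u
  · exact hmax.mem_of_rule hclosed h (Fm.closed_subst1 (hclosed _ h) u) fun _ => .fex u
  · exact hmax.mem_of_rule hclosed h A.closed_univClosure fun _ hS =>
      .tcolon hS (Fm.closed_just_iff.1 (hclosed _ h))
  · exact hmax.mem_and_mem_of_rule hclosed h (hJ (hX h)) (hJ (hX h)) fun _ hS => .fplus hS (hX h)
  · exact hmax.mem_or_mem_of_rule hclosed h (hJ (hX h)) (hJ (hX h)) fun _ hS =>
      .fapp A hS (hX h) hA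
  · exact hmax.mem_of_rule hclosed h (hJ (hX h)) fun _ hS => .fbang hS (hX h)
  · exact hmax.mem_of_rule hclosed h (hJ ((hX h).insert_inr u)) fun _ hS => .ctr u hS (hX h) hu
  · exact hmax.mem_of_rule hclosed h (hJ (hX h).of_insert) fun _ hS =>
      .exp u hS (hX h).of_insert hu hA
  · exact hmax.mem_of_rule hclosed h (hJ (hX h)) fun _ hS => .ins x u hS (hX h)
  · exact hmax.mem_of_rule hclosed h (hJ (hX h)) fun _ hS => .genx hS (hX h)

/-- Lemma 3.  An E-complete maximally tableau `FOLP_CS`-consistent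
set of closed Par-formulas is closed under all `FOLP_CS`-tableau rules. -/
theorem mcs_closed_under_tableau_rules
    (CS : Set (ℕ × Fm Empty)) (hCS : ConstantSpec CS)
    (Γ : Set (Fm ℕ)) (hclosed : ∀ F ∈ Γ, F.Closed)
    (hmax : MaximalCons CS Γ) (hE : EComplete Γ) :
    -- (F¬)
    (∀ A : Fm ℕ, Fm.neg (Fm.neg A) ∈ Γ → A ∈ Γ) ∧
    -- (T→)
    (∀ A B : Fm ℕ, Fm.imp A B ∈ Γ → Fm.neg A ∈ Γ ∨ B ∈ Γ) ∧
    -- (F→)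
    (∀ A B : Fm ℕ, Fm.neg (Fm.imp A B) ∈ Γ → A ∈ Γ ∧ Fm.neg B ∈ Γ) ∧
    -- (T∀)
    (∀ (x : ℕ) (A : Fm ℕ) (u : ℕ), Fm.all x A ∈ Γ → A.subst1 x u ∈ Γ) ∧
    -- (F∃)
    (∀ (x : ℕ) (A : Fm ℕ) (u : ℕ), Fm.neg (Fm.ex x A) ∈ Γ →
      Fm.neg (A.subst1 x u) ∈ Γ) ∧
    -- (T∃)
    (∀ (x : ℕ) (A : Fm ℕ), Fm.ex x A ∈ Γ → ∃ u : ℕ, A.subst1 x u ∈ Γ) ∧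
    -- (F∀)
    (∀ (x : ℕ) (A : Fm ℕ), Fm.neg (Fm.all x A) ∈ Γ →
      ∃ u : ℕ, Fm.neg (A.subst1 x u) ∈ Γ) ∧
    -- (T:)
    (∀ (t : Tm) (X : Finset (ℕ ⊕ ℕ)) (A : Fm ℕ), Fm.just t X A ∈ Γ →
      A.univClosure ∈ Γ) ∧
    -- (F+)
    (∀ (t s : Tm) (X : Finset (ℕ ⊕ ℕ)) (A : Fm ℕ),
      Fm.neg (Fm.just (Tm.plus t s) X A) ∈ Γ →
      Fm.neg (Fm.just t X A) ∈ Γ ∧ Fm.neg (Fm.just s X A) ∈ Γ) ∧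
    -- (F·)
    (∀ (s t : Tm) (X : Finset (ℕ ⊕ ℕ)) (B : Fm ℕ),
      Fm.neg (Fm.just (Tm.app s t) X B) ∈ Γ →
      ∀ A : Fm ℕ, (∀ u ∈ A.kocc, Sum.inr u ∈ X) →
        Fm.neg (Fm.just s X (A.imp B)) ∈ Γ ∨ Fm.neg (Fm.just t X A) ∈ Γ) ∧
    -- (F!)
    (∀ (t : Tm) (X : Finset (ℕ ⊕ ℕ)) (A : Fm ℕ),
      Fm.neg (Fm.just (Tm.bang t) X (Fm.just t X A)) ∈ Γ →
      Fm.neg (Fm.just t X A) ∈ Γ) ∧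
    -- (Ctr)
    (∀ (t : Tm) (X : Finset (ℕ ⊕ ℕ)) (A : Fm ℕ) (u : ℕ),
      Fm.neg (Fm.just t X A) ∈ Γ → Sum.inr u ∉ X →
      Fm.neg (Fm.just t (insert (Sum.inr u) X) A) ∈ Γ) ∧
    -- (Exp)
    (∀ (t : Tm) (X : Finset (ℕ ⊕ ℕ)) (A : Fm ℕ) (u : ℕ),
      Fm.neg (Fm.just t (insert (Sum.inr u) X) A) ∈ Γ → Sum.inr u ∉ X →
      u ∉ A.kocc → Fm.neg (Fm.just t X A) ∈ Γ) ∧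
    -- (Ins)
    (∀ (t : Tm) (X : Finset (ℕ ⊕ ℕ)) (A : Fm ℕ) (x u : ℕ),
      Fm.neg (Fm.just t X (A.subst1 x u)) ∈ Γ → Fm.neg (Fm.just t X A) ∈ Γ) ∧
    -- (gen_x)
    (∀ (t : Tm) (X : Finset (ℕ ⊕ ℕ)) (A : Fm ℕ) (x : ℕ),
      Fm.neg (Fm.just (Tm.gen x t) X (Fm.all x A)) ∈ Γ →
      Fm.neg (Fm.just t X A) ∈ Γ) :=
  mcs_closed_under_tableau_rules_general CS Γ hclosed hmax hE
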